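/- (Intermediate value theorem in L⁰) Let X, X̄ ∈ L⁰ with X ≤ X̄ P-a.s. and let [X, X̄] = {Z ∈ L⁰ : X ≤ Z ≤ X̄}. Let f : [X, X̄] → L⁰ be a local, sequentially continuous function and set A = {f(X) ≤ f(X̄)} ∈ 𝒜. Then for every Y ∈ [1_A f(X) + 1_{A^c} f(X̄), 1_A f(X̄) + 1_{A^c} f(X)] there exists Ȳ ∈ [X, X̄] with f(Ȳ) = Y. -/

import Mathlib

/-!
The hypothesis on `Y` says that `Y ω` lies between `f X ω` and `f X̄ ω` for a.e. `ω`.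
Bisection: starting from `[X, X̄]`, halve the current interval `[L, U]` at its midpoint `M` and keep,
separately on each `ω`, the half on whose endpoints `f` still brackets `Y`; locality of `f` is what
makes `f` commute with this `ω`-wise choice. The endpoints converge a.s. to a common limit `Ȳ`, and
sequential continuity squeezes `Y` to `f(Ȳ)`.
-/

open MeasureTheory Filter

noncomputable section

variable {Ω : Type*} [MeasurableSpace Ω]

/-- `L⁰(Ω,𝒜,P)`: equivalence classes of real-valued measurable functions modulo
`P`-almost-sure equality. -/
abbrev L0 (P : Measure Ω) : Type _ := Ω →ₘ[P] ℝ

namespace L0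

variable (P : Measure Ω)

/-- The indicator `1_A` of a measurable set as an element of `L⁰`. -/
def ind (A : Set Ω) : L0 P :=
  letI := Classical.dec (MeasurableSet A)
  if h : MeasurableSet A then
    AEEqFun.mk (A.indicator fun _ => (1 : ℝ)) (aestronglyMeasurable_const.indicator h)
  else 0

/-- A partition: a countable family of measurable sets, pairwise disjoint up to null
sets, covering `Ω` up to a null set. -/
structure IsPartition (A : ℕ → Set Ω) : Prop where
  meas : ∀ i, MeasurableSet (A i)
  disj : ∀ i j, i ≠ j → P (A i ∩ A j) = 0
  full : P (⋃ i, A i) = 1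

/-- `Z = Σᵢ 1_{Aᵢ} Xᵢ` in `L⁰`: `Z` agrees with `Xᵢ` on `Aᵢ`, i.e. `1_{Aᵢ}·Z = 1_{Aᵢ}·Xᵢ`. -/
def IsGluing1 (A : ℕ → Set Ω) (X : ℕ → L0 P) (Z : L0 P) : Prop :=
  ∀ i, ind P (A i) * Z = ind P (A i) * X i

/-- `Z = Σᵢ 1_{Aᵢ} Xᵢ` in `(L⁰)^d`. -/
def IsGluing {d : ℕ} (A : ℕ → Set Ω) (X : ℕ → Fin d → L0 P) (Z : Fin d → L0 P) : Prop :=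
  ∀ k, IsGluing1 P A (fun i => X i k) (Z k)

/-- The σ-stable hull `σ(𝒞)` of a set `𝒞 ⊆ (L⁰)^d`. -/
def sigmaHull {d : ℕ} (C : Set (Fin d → L0 P)) : Set (Fin d → L0 P) :=
  {Z | ∃ (A : ℕ → Set Ω) (X : ℕ → Fin d → L0 P),
    IsPartition P A ∧ (∀ i, X i ∈ C) ∧ IsGluing P A X Z}

/-- A function `f` defined (at least) on a σ-stable set `C ⊆ (L⁰)^d` is local if
`f(Σᵢ 1_{Aᵢ} Xᵢ) = Σᵢ 1_{Aᵢ} f(Xᵢ)` for every partition `(Aᵢ)` and family `(Xᵢ)` in `C`. -/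
def IsLocal {d e : ℕ} (C : Set (Fin d → L0 P)) (f : (Fin d → L0 P) → (Fin e → L0 P)) : Prop :=
  ∀ (A : ℕ → Set Ω) (X : ℕ → Fin d → L0 P) (Z : Fin d → L0 P),
    IsPartition P A → (∀ i, X i ∈ C) → Z ∈ C → IsGluing P A X Z →
    IsGluing P A (fun i => f (X i)) (f Z)

/-- Locality for functions with values in `L⁰`. -/
def IsLocalScalar {d : ℕ} (C : Set (Fin d → L0 P)) (f : (Fin d → L0 P) → L0 P) : Prop :=
  ∀ (A : ℕ → Set Ω) (X : ℕ → Fin d → L0 P) (Z : Fin d → L0 P),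
    IsPartition P A → (∀ i, X i ∈ C) → Z ∈ C → IsGluing P A X Z →
    IsGluing1 P A (fun i => f (X i)) (f Z)

/-- Locality for functions from `L⁰` to `L⁰`. -/
def IsLocal1 (C : Set (L0 P)) (f : L0 P → L0 P) : Prop :=
  ∀ (A : ℕ → Set Ω) (X : ℕ → L0 P) (Z : L0 P),
    IsPartition P A → (∀ i, X i ∈ C) → Z ∈ C → IsGluing1 P A X Z →
    IsGluing1 P A (fun i => f (X i)) (f Z)

/-- `P`-almost sure convergence of a sequence in `L⁰`. -/
def TendstoAS (X : ℕ → L0 P) (Y : L0 P) : Prop :=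
  ∀ᵐ ω ∂P, Tendsto (fun n => X n ω) atTop (nhds (Y ω))

/-- `P`-almost sure convergence of a sequence in `(L⁰)^d`. -/
def TendstoASd {d : ℕ} (X : ℕ → Fin d → L0 P) (Y : Fin d → L0 P) : Prop :=
  ∀ k, TendstoAS P (fun n => X n k) (Y k)

/-- Sequential continuity (w.r.t. `P`-a.s. convergence) of `f` on `C ⊆ (L⁰)^d`. -/
def SeqContinuous {d e : ℕ} (C : Set (Fin d → L0 P)) (f : (Fin d → L0 P) → (Fin e → L0 P)) :
    Prop :=
  ∀ (X : ℕ → Fin d → L0 P) (Y : Fin d → L0 P), (∀ n, X n ∈ C) → Y ∈ C →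
    TendstoASd P X Y → TendstoASd P (fun n => f (X n)) (f Y)

/-- Sequential continuity for functions from `L⁰` to `L⁰`. -/
def SeqContinuous1 (C : Set (L0 P)) (f : L0 P → L0 P) : Prop :=
  ∀ (X : ℕ → L0 P) (Y : L0 P), (∀ n, X n ∈ C) → Y ∈ C →
    TendstoAS P X Y → TendstoAS P (fun n => f (X n)) (f Y)

/-- The `L⁰`-convex hull `conv(X₁,…,X_N)` of a finite family in `(L⁰)^d`. -/
def conv {d : ℕ} {ι : Type*} [Fintype ι] (X : ι → Fin d → L0 P) : Set (Fin d → L0 P) :=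
  {Y | ∃ lam : ι → L0 P, (∀ i, 0 ≤ lam i) ∧ (∑ i, lam i) = 1 ∧ Y = ∑ i, lam i • X i}

/-- The affine hull `aff(X₁,…,X_N)` of a finite family in `(L⁰)^d`. -/
def aff {d : ℕ} {ι : Type*} [Fintype ι] (X : ι → Fin d → L0 P) : Set (Fin d → L0 P) :=
  {Y | ∃ lam : ι → L0 P, (∑ i, lam i) = 1 ∧ Y = ∑ i, lam i • X i}

/-- Affine independence of `X₁,…,X_N` in `(L⁰)^d`: either `N = 1`, or `N > 1` and
`Σᵢ₌₁^{N−1} λᵢ (Xᵢ − X_N) = 0` implies `λ₁ = ⋯ = λ_{N−1} = 0`. -/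
def AffInd {d : ℕ} : {N : ℕ} → (X : Fin N → Fin d → L0 P) → Prop
  | 0, _ => False
  | 1, _ => True
  | (m + 2), X => ∀ lam : Fin (m + 1) → L0 P,
      (∑ i : Fin (m + 1), lam i • (X i.castSucc - X (Fin.last (m + 1)))) = 0 → ∀ i, lam i = 0

/-- The `L⁰`-scalar product on `(L⁰)^d`. -/
def inner {d : ℕ} (X Y : Fin d → L0 P) : L0 P := ∑ k, X k * Y k

/-- The `L⁰`-norm on `(L⁰)^d`. -/
def norm {d : ℕ} (X : Fin d → L0 P) : L0 P :=
  AEEqFun.comp Real.sqrt Real.continuous_sqrt (inner P X X)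

/-- `D` is the essential supremum (least upper bound in the `P`-a.s. order) of a set
`F ⊆ L⁰`. -/
def IsEssSup (F : Set (L0 P)) (D : L0 P) : Prop :=
  (∀ X ∈ F, X ≤ D) ∧ ∀ D' : L0 P, (∀ X ∈ F, X ≤ D') → D ≤ D'

/-- `𝒞 ⊆ (L⁰)^d` is bounded if `esssup_{X ∈ 𝒞} ‖X‖` belongs to `L⁰`. -/
def Bounded {d : ℕ} (C : Set (Fin d → L0 P)) : Prop :=
  ∃ b : L0 P, ∀ X ∈ C, norm P X ≤ b

/-- `𝒞 ⊆ (L⁰)^d` is sequentially closed if it contains all `P`-a.s. limits of its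
sequences. -/
def SeqClosed {d : ℕ} (C : Set (Fin d → L0 P)) : Prop :=
  ∀ (X : ℕ → Fin d → L0 P) (Y : Fin d → L0 P), (∀ n, X n ∈ C) → TendstoASd P X Y → Y ∈ C

/-- `L⁰`-convexity of a subset of `(L⁰)^d`. -/
def L0Convex {d : ℕ} (C : Set (Fin d → L0 P)) : Prop :=
  ∀ X ∈ C, ∀ Y ∈ C, ∀ lam : L0 P, 0 ≤ lam → lam ≤ 1 → lam • X + (1 - lam) • Y ∈ C

/-- The vertices `Y_k^π = (1/k) Σᵢ₌₁ᵏ X_{π(i)}` of the member `C_π` of the barycentric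
subdivision (0-based: `bary P X π k = (1/(k+1)) Σ_{i ≤ k} X_{π(i)}`). -/
def bary {d N : ℕ} (X : Fin N → Fin d → L0 P) (π : Equiv.Perm (Fin N)) (k : Fin N) :
    Fin d → L0 P :=
  ((k.1 + 1 : ℝ)⁻¹) • ∑ i ∈ Finset.univ.filter (· ≤ k), X (π i)

end L0

end


open MeasureTheory Filter Set Topology

lemma eq_of_tendsto_of_mem_uIcc {a b : ℕ → ℝ} {c y : ℝ} (ha : Tendsto a atTop (𝓝 c))
    (hb : Tendsto b atTop (𝓝 c)) (hy : ∀ n, y ∈ uIcc (a n) (b n)) : y = c := by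
  have hinf : Tendsto (fun n => a n ⊓ b n) atTop (𝓝 c) := by simpa using ha.inf_nhds hb
  have hsup : Tendsto (fun n => a n ⊔ b n) atTop (𝓝 c) := by simpa using ha.sup_nhds hb
  exact le_antisymm (ge_of_tendsto' hsup fun n => (hy n).2) (le_of_tendsto' hinf fun n => (hy n).1)

lemma exists_tendsto_of_monotone_of_antitone {l u : ℕ → ℝ} (hl : Monotone l) (hu : Antitone u)
    (hgap : Tendsto (fun n => u n - l n) atTop (𝓝 0)) :
    ∃ c, Tendsto l atTop (𝓝 c) ∧ Tendsto u atTop (𝓝 c) := by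
  have hlu (n : ℕ) : l n ≤ u n :=
    sub_nonneg.1 <| le_of_tendsto hgap <| eventually_atTop.2
      ⟨n, fun m hm => by linarith [hl hm, hu hm]⟩
  have hlim := tendsto_atTop_ciSup hl ⟨u 0, by
    rintro _ ⟨n, rfl⟩
    exact (hlu n).trans (hu n.zero_le)⟩
  exact ⟨_, hlim, by simpa using hlim.add hgap⟩

namespace L0

variable {Ω : Type*} [MeasurableSpace Ω] {P : Measure Ω}

lemma ind_mul_eq_ind_mul_iff {S : Set Ω} (hS : MeasurableSet S) {Z W : L0 P} :
    ind P S * Z = ind P S * W ↔ ∀ᵐ ω ∂P, ω ∈ S → Z ω = W ω := by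
  have hind : ⇑(ind P S) =ᵐ[P] S.indicator 1 := by
    simp only [ind, dif_pos hS]
    exact AEEqFun.coeFn_mk _ _
  have hmul (V : L0 P) : ⇑(ind P S * V) =ᵐ[P] S.indicator V := by
    filter_upwards [AEEqFun.coeFn_mul (ind P S) V, hind] with ω h1 h2
    rw [h1, Pi.mul_apply, h2]
    by_cases hω : ω ∈ S <;> simp [hω]
  rw [AEEqFun.ext_iff]
  constructor
  · intro h
    filter_upwards [h, hmul Z, hmul W] with ω h hZ hW hω
    simpa [hZ, hW, hω] using h
  · intro h
    filter_upwards [h, hmul Z, hmul W] with ω h hZ hW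
    rw [hZ, hW]
    by_cases hω : ω ∈ S <;> simp [hω, h]

lemma isPartition_pair [IsProbabilityMeasure P] {B : Set Ω} (hB : MeasurableSet B) :
    IsPartition P (fun n => if n = 0 then B else if n = 1 then Bᶜ else ∅) where
  meas n := by split_ifs <;> simp [hB, hB.compl]
  disj i j hij := by
    rcases i with _ | _ | i <;> rcases j with _ | _ | j <;> simp_all [inter_comm]
  full := by
    have hcover : ⋃ n, (if n = 0 then B else if n = 1 then Bᶜ else ∅) = univ :=
      eq_univ_of_forall fun ω => mem_iUnion.2 <| by
        by_cases hω : ω ∈ B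
        exacts [⟨0, by simpa⟩, ⟨1, by simpa⟩]
    rw [hcover, measure_univ]

lemma exists_coeFn_ae_eq_piecewise {B : Set Ω} [DecidablePred (· ∈ B)] (hB : MeasurableSet B)
    (M L : L0 P) : ∃ Z : L0 P, ⇑Z =ᵐ[P] B.piecewise M L :=
  ⟨AEEqFun.mk _ (M.stronglyMeasurable.piecewise hB L.stronglyMeasurable).aestronglyMeasurable,
    AEEqFun.coeFn_mk _ _⟩

lemma IsLocal1.ae_eq_piecewise [IsProbabilityMeasure P] {C : Set (L0 P)} {f : L0 P → L0 P}
    (hf : IsLocal1 P C f) {B : Set Ω} [DecidablePred (· ∈ B)] (hB : MeasurableSet B)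
    {M L Z : L0 P} (hM : M ∈ C) (hL : L ∈ C) (hZ : Z ∈ C) (hZB : ⇑Z =ᵐ[P] B.piecewise M L) :
    ⇑(f Z) =ᵐ[P] B.piecewise (f M) (f L) := by
  have hpart := isPartition_pair (P := P) hB
  have hglue : IsGluing1 P _ (fun n => if n = 0 then M else L) Z := fun n => by
    refine (ind_mul_eq_ind_mul_iff (hpart.meas n)).2 ?_
    filter_upwards [hZB] with ω hω hn
    rcases n with _ | _ | n <;> simp_all
  have hfglue := hf _ _ Z hpart (fun n => by split_ifs <;> assumption) hZ hglue
  filter_upwards [(ind_mul_eq_ind_mul_iff hB).1 (hfglue 0),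
    (ind_mul_eq_ind_mul_iff hB.compl).1 (hfglue 1)] with ω h0 h1
  by_cases hω : ω ∈ B
  · simpa [hω] using h0 hω
  · simpa [hω] using h1 hω

lemma ae_monotone_of_monotone {X : ℕ → L0 P} (hX : Monotone X) :
    ∀ᵐ ω ∂P, Monotone fun n => X n ω := by
  filter_upwards [ae_all_iff.2 fun n => AEEqFun.coeFn_le.2 (hX (Nat.le_succ n))] with ω hω
  exact monotone_nat_of_le_succ hω

lemma ae_antitone_of_antitone {X : ℕ → L0 P} (hX : Antitone X) :
    ∀ᵐ ω ∂P, Antitone fun n => X n ω := by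
  filter_upwards [ae_all_iff.2 fun n => AEEqFun.coeFn_le.2 (hX (Nat.le_succ n))] with ω hω
  exact antitone_nat_of_succ_le hω

lemma tendstoAS_pow_smul {c : ℝ} (hc : |c| < 1) (D : L0 P) :
    TendstoAS P (fun n => c ^ n • D) 0 := by
  filter_upwards [ae_all_iff.2 fun n => AEEqFun.coeFn_smul (c ^ n) D, AEEqFun.coeFn_zero (β := ℝ)]
    with ω hsmul hzero
  simp only [hsmul, hzero, Pi.smul_apply, smul_eq_mul, Pi.zero_apply]
  simpa using (tendsto_pow_atTop_nhds_zero_of_abs_lt_one hc).mul_const (D ω)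

lemma exists_tendstoAS_of_ae_exists_tendsto {X : ℕ → L0 P}
    (h : ∀ᵐ ω ∂P, ∃ c, Tendsto (fun n => X n ω) atTop (𝓝 c)) : ∃ Z : L0 P, TendstoAS P X Z := by
  obtain ⟨g, hg_meas, hg⟩ := exists_stronglyMeasurable_limit_of_tendsto_ae
    (fun n => (X n).aestronglyMeasurable) h
  refine ⟨AEEqFun.mk g hg_meas.aestronglyMeasurable, ?_⟩
  filter_upwards [hg, AEEqFun.coeFn_mk g hg_meas.aestronglyMeasurable] with ω hω hZ
  rwa [hZ]

lemma exists_tendstoAS_of_monotone_of_antitone {L U : ℕ → L0 P} (hL : Monotone L)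
    (hU : Antitone U) (hgap : TendstoAS P (fun n => U n - L n) 0) :
    ∃ Z, TendstoAS P L Z ∧ TendstoAS P U Z ∧ ∀ n, L n ≤ Z ∧ Z ≤ U n := by
  have hgap' : ∀ᵐ ω ∂P, Tendsto (fun n => U n ω - L n ω) atTop (𝓝 0) := by
    filter_upwards [hgap, ae_all_iff.2 fun n => AEEqFun.coeFn_sub (U n) (L n),
      AEEqFun.coeFn_zero (β := ℝ)] with ω hω hsub hzero
    simpa [hsub, hzero] using hω
  have hlim : ∀ᵐ ω ∂P, ∃ c,
      Tendsto (fun n => L n ω) atTop (𝓝 c) ∧ Tendsto (fun n => U n ω) atTop (𝓝 c) := by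
    filter_upwards [ae_monotone_of_monotone hL, ae_antitone_of_antitone hU, hgap']
      with ω hl hu hg
    exact exists_tendsto_of_monotone_of_antitone hl hu hg
  obtain ⟨Z, hLZ⟩ := exists_tendstoAS_of_ae_exists_tendsto (hlim.mono fun _ ⟨c, hc, _⟩ => ⟨c, hc⟩)
  have hUZ : TendstoAS P U Z := by
    filter_upwards [hLZ, hlim] with ω hLω ⟨c, hc, hUc⟩
    rwa [tendsto_nhds_unique hLω hc]
  refine ⟨Z, hLZ, hUZ, fun n => ⟨AEEqFun.coeFn_le.1 ?_, AEEqFun.coeFn_le.1 ?_⟩⟩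
  · filter_upwards [hLZ, ae_monotone_of_monotone hL] with ω hω hmono
    exact hmono.ge_of_tendsto hω n
  · filter_upwards [hUZ, ae_antitone_of_antitone hU] with ω hω hanti
    exact hanti.le_of_tendsto hω n

lemma coeFn_two_inv_smul_add (L U : L0 P) :
    ∀ᵐ ω ∂P, ((2:ℝ)⁻¹ • (L + U)) ω = (L ω + U ω) / 2 := by
  filter_upwards [AEEqFun.coeFn_smul (2:ℝ)⁻¹ (L + U), AEEqFun.coeFn_add L U] with ω h1 h2
  rw [h1, Pi.smul_apply, h2, Pi.add_apply, smul_eq_mul]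
  ring

lemma two_inv_smul_add_mem_Icc {L U : L0 P} (hLU : L ≤ U) :
    (2:ℝ)⁻¹ • (L + U) ∈ Icc L U := by
  constructor <;> refine AEEqFun.coeFn_le.1 ?_ <;>
    filter_upwards [coeFn_two_inv_smul_add L U, AEEqFun.coeFn_le.2 hLU] with ω hM hLUω <;>
    linarith

lemma piecewise_midpoint_bisects {L U L' U' : L0 P} {B : Set Ω} [DecidablePred (· ∈ B)]
    (hLU : L ≤ U) (hL' : ⇑L' =ᵐ[P] B.piecewise L ⇑((2:ℝ)⁻¹ • (L + U)))
    (hU' : ⇑U' =ᵐ[P] B.piecewise ⇑((2:ℝ)⁻¹ • (L + U)) U) :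
    L ≤ L' ∧ L' ≤ U' ∧ U' ≤ U ∧ U' - L' = (2:ℝ)⁻¹ • (U - L) := by
  have hM := coeFn_two_inv_smul_add L U
  have key : ∀ᵐ ω ∂P, L ω ≤ L' ω ∧ L' ω ≤ U' ω ∧ U' ω ≤ U ω ∧
      U' ω - L' ω = 2⁻¹ * (U ω - L ω) := by
    filter_upwards [hL', hU', hM, AEEqFun.coeFn_le.2 hLU] with ω hL'ω hU'ω hMω hLUω
    by_cases hω : ω ∈ B
    · simp only [hL'ω, hU'ω, piecewise_eq_of_mem _ _ _ hω, hMω]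
      refine ⟨le_rfl, ?_, ?_, ?_⟩ <;> linarith
    · simp only [hL'ω, hU'ω, piecewise_eq_of_notMem _ _ _ hω, hMω]
      refine ⟨?_, ?_, le_rfl, ?_⟩ <;> linarith
  refine ⟨AEEqFun.coeFn_le.1 (key.mono fun _ h => h.1),
    AEEqFun.coeFn_le.1 (key.mono fun _ h => h.2.1),
    AEEqFun.coeFn_le.1 (key.mono fun _ h => h.2.2.1), AEEqFun.ext ?_⟩
  filter_upwards [key, AEEqFun.coeFn_sub U' L', AEEqFun.coeFn_smul (2:ℝ)⁻¹ (U - L),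
    AEEqFun.coeFn_sub U L] with ω hω h1 h2 h3
  simp [h1, h2, h3, hω.2.2.2]

structure IsBracket (X Xb Y : L0 P) (f : L0 P → L0 P) (L U : L0 P) : Prop where
  lower : X ≤ L
  le : L ≤ U
  upper : U ≤ Xb
  ae_mem_uIcc : ∀ᵐ ω ∂P, Y ω ∈ uIcc (f L ω) (f U ω)

section Bisection

variable {X Xb Y : L0 P} {f : L0 P → L0 P}

lemma IsBracket.left_mem {L U : L0 P} (h : IsBracket X Xb Y f L U) : L ∈ Icc X Xb :=
  ⟨h.lower, h.le.trans h.upper⟩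

lemma IsBracket.right_mem {L U : L0 P} (h : IsBracket X Xb Y f L U) : U ∈ Icc X Xb :=
  ⟨h.lower.trans h.le, h.upper⟩

variable [IsProbabilityMeasure P]

lemma IsBracket.exists_half (hf : IsLocal1 P (Icc X Xb) f) {L U : L0 P}
    (h : IsBracket X Xb Y f L U) : ∃ L' U', IsBracket X Xb Y f L' U' ∧
      L ≤ L' ∧ U' ≤ U ∧ U' - L' = (2:ℝ)⁻¹ • (U - L) := by
  classical
  set M : L0 P := (2:ℝ)⁻¹ • (L + U)
  set B : Set Ω := {ω | Y ω ∈ uIcc (f L ω) (f M ω)}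
  have hB : MeasurableSet B :=
    measurableSet_le ((f L).measurable.min (f M).measurable) Y.measurable |>.inter <|
      measurableSet_le Y.measurable ((f L).measurable.max (f M).measurable)
  obtain ⟨L', hL'⟩ := exists_coeFn_ae_eq_piecewise hB L M
  obtain ⟨U', hU'⟩ := exists_coeFn_ae_eq_piecewise hB M U
  obtain ⟨hLL', hL'U', hU'U, hgap⟩ := piecewise_midpoint_bisects h.le hL' hU'
  have mem_of_le {V : L0 P} (hLV : L ≤ V) (hVU : V ≤ U) : V ∈ Icc X Xb :=
    ⟨h.lower.trans hLV, hVU.trans h.upper⟩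
  obtain ⟨hLM, hMU⟩ := two_inv_smul_add_mem_Icc h.le
  have hM : M ∈ Icc X Xb := mem_of_le hLM hMU
  have hfL' := hf.ae_eq_piecewise hB h.left_mem hM (mem_of_le hLL' (hL'U'.trans hU'U)) hL'
  have hfU' := hf.ae_eq_piecewise hB hM h.right_mem (mem_of_le (hLL'.trans hL'U') hU'U) hU'
  refine ⟨L', U', ⟨h.lower.trans hLL', hL'U', hU'U.trans h.upper, ?_⟩, hLL', hU'U, hgap⟩
  filter_upwards [h.ae_mem_uIcc, hfL', hfU'] with ω hY hfL'ω hfU'ω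
  rw [hfL'ω, hfU'ω]
  by_cases hω : ω ∈ B
  · rw [piecewise_eq_of_mem _ _ _ hω, piecewise_eq_of_mem _ _ _ hω]
    exact hω
  · rw [piecewise_eq_of_notMem _ _ _ hω, piecewise_eq_of_notMem _ _ _ hω]
    exact (uIcc_subset_uIcc_union_uIcc hY).resolve_left hω

lemma IsBracket.exists_bisection_seq (hf : IsLocal1 P (Icc X Xb) f)
    (h : IsBracket X Xb Y f X Xb) : ∃ L U : ℕ → L0 P, Monotone L ∧ Antitone U ∧
      (∀ n, IsBracket X Xb Y f (L n) (U n)) ∧ ∀ n, U n - L n = (2:ℝ)⁻¹ ^ n • (Xb - X) := by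
  choose! nextL nextU hnext using fun L U (hLU : IsBracket X Xb Y f L U) => hLU.exists_half hf
  let seq : ℕ → L0 P × L0 P := fun n =>
    Nat.rec (X, Xb) (fun _ p => (nextL p.1 p.2, nextU p.1 p.2)) n
  have hseq (n : ℕ) : IsBracket X Xb Y f (seq n).1 (seq n).2 ∧
      (seq n).2 - (seq n).1 = (2:ℝ)⁻¹ ^ n • (Xb - X) := by
    induction n with
    | zero => exact ⟨h, by simp [seq]⟩
    | succ n ih =>
      obtain ⟨hbr, -, -, hgap⟩ := hnext _ _ ih.1
      exact ⟨hbr, by rw [hgap, ih.2, smul_smul, pow_succ']⟩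
  refine ⟨fun n => (seq n).1, fun n => (seq n).2, monotone_nat_of_le_succ fun n => ?_,
    antitone_nat_of_succ_le fun n => ?_, fun n => (hseq n).1, fun n => (hseq n).2⟩
  exacts [(hnext _ _ (hseq n).1).2.1, (hnext _ _ (hseq n).1).2.2.1]

end Bisection

end L0

open MeasureTheory in
theorem stmt_19_general {Ω : Type*} [MeasurableSpace Ω] (P : Measure Ω) [IsProbabilityMeasure P]
    (X Xb : L0 P) (hXXb : X ≤ Xb)
    (f : L0 P → L0 P)
    (hfloc : L0.IsLocal1 P {Z | X ≤ Z ∧ Z ≤ Xb} f)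
    (hfc : L0.SeqContinuous1 P {Z | X ≤ Z ∧ Z ≤ Xb} f)
    (A : Set Ω)
    (Y : L0 P)
    (hYl : ∀ᵐ ω ∂P, A.indicator (⇑(f X)) ω + Aᶜ.indicator (⇑(f Xb)) ω ≤ Y ω)
    (hYu : ∀ᵐ ω ∂P, Y ω ≤ A.indicator (⇑(f Xb)) ω + Aᶜ.indicator (⇑(f X)) ω) :
    ∃ Yb : L0 P, (X ≤ Yb ∧ Yb ≤ Xb) ∧ f Yb = Y := by
  have hY : ∀ᵐ ω ∂P, Y ω ∈ uIcc (f X ω) (f Xb ω) := by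
    filter_upwards [hYl, hYu] with ω hl hu
    by_cases hω : ω ∈ A <;> simp [hω] at hl hu
    exacts [mem_uIcc_of_le hl hu, mem_uIcc_of_ge hl hu]
  obtain ⟨L, U, hL, hU, hbr, hgap⟩ :=
    L0.IsBracket.exists_bisection_seq hfloc ⟨le_rfl, hXXb, le_rfl, hY⟩
  obtain ⟨Yb, hLYb, hUYb, hYb⟩ := L0.exists_tendstoAS_of_monotone_of_antitone hL hU <| by
    simpa only [hgap] using L0.tendstoAS_pow_smul (by norm_num) (Xb - X)
  have hYbmem : X ≤ Yb ∧ Yb ≤ Xb := ⟨(hbr 0).lower.trans (hYb 0).1, (hYb 0).2.trans (hbr 0).upper⟩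
  have hfL := hfc L Yb (fun n => (hbr n).left_mem) hYbmem hLYb
  have hfU := hfc U Yb (fun n => (hbr n).right_mem) hYbmem hUYb
  refine ⟨Yb, hYbmem, AEEqFun.ext ?_⟩
  filter_upwards [hfL, hfU, ae_all_iff.2 fun n => (hbr n).ae_mem_uIcc] with ω hfLω hfUω hYω
  exact (eq_of_tendsto_of_mem_uIcc hfLω hfUω hYω).symm

open MeasureTheory in
/-- intermediate value theorem in `L⁰`. -/
theorem stmt_19 {Ω : Type*} [MeasurableSpace Ω] (P : Measure Ω) [IsProbabilityMeasure P]
    (X Xb : L0 P) (hXXb : X ≤ Xb)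
    (f : L0 P → L0 P)
    (hfloc : L0.IsLocal1 P {Z | X ≤ Z ∧ Z ≤ Xb} f)
    (hfc : L0.SeqContinuous1 P {Z | X ≤ Z ∧ Z ≤ Xb} f)
    (A : Set Ω) (hA : MeasurableSet A)
    (hAdef : ∀ᵐ ω ∂P, ω ∈ A ↔ f X ω ≤ f Xb ω)
    (Y : L0 P)
    (hYl : ∀ᵐ ω ∂P, A.indicator (⇑(f X)) ω + Aᶜ.indicator (⇑(f Xb)) ω ≤ Y ω)
    (hYu : ∀ᵐ ω ∂P, Y ω ≤ A.indicator (⇑(f Xb)) ω + Aᶜ.indicator (⇑(f X)) ω) :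
    ∃ Yb : L0 P, (X ≤ Yb ∧ Yb ≤ Xb) ∧ f Yb = Y :=
  stmt_19_general P X Xb hXXb f hfloc hfc A Y hYl hYu
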